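/- arXiv:1810.03939 — 4 statements merged into one kernel-verified Lean document; each statement's English description precedes it below -/
import Mathlib

section
/- Let $(X,d)$ be a metric space, $x_0,x_1,x\in X$, $\vartheta\in(0,1)$, $\eps\in(0,1)$. If $x$ is a $(\vartheta,\eps)$-intermediate point between $x_0$ and $x_1$, then $\left|\frac{d(x_0,x)}{\vartheta}-\frac{d(x,x_1)}{1-\vartheta}\right|\le \eps\, d(x_0,x_1)$ and $d(x_0,x)+d(x,x_1)\le d(x_0,x_1)\sqrt{1+\eps^2\vartheta(1-\vartheta)}$. -/
/-- `x` is a `(θ, ε)`-intermediate point between `x₀` and `x₁`. -/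
def IsIntermediatePt {X : Type*} [MetricSpace X] (x₀ x₁ x : X) (θ ε : ℝ) : Prop :=
  dist x₀ x ^ 2 / θ + dist x x₁ ^ 2 / (1 - θ) ≤ dist x₀ x₁ ^ 2 * (1 + ε ^ 2 * θ * (1 - θ))

/-! Write `a = d(x₀,x)`, `b = d(x,x₁)`, `A = a / θ` and `B = b / (1 - θ)`. The identity
`(θ A + (1 - θ) B)² = θ A² + (1 - θ) B² - θ (1 - θ) (A - B)²` splits the left-hand side of the
defining inequality into `(a + b)²`, which is at least `d(x₀,x₁)²` by the triangle inequality,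
plus the nonnegative defect `θ (1 - θ) (A - B)²`. Each part is therefore bounded by the excess
`ε² θ (1 - θ) d(x₀,x₁)²` of the right-hand side over `d(x₀,x₁)²`, which gives the two estimates. -/

lemma sq_div_add_sq_div_one_sub {θ : ℝ} (hθ₀ : θ ≠ 0) (hθ₁ : 1 - θ ≠ 0) (a b : ℝ) :
    a ^ 2 / θ + b ^ 2 / (1 - θ) = (a + b) ^ 2 + θ * (1 - θ) * (a / θ - b / (1 - θ)) ^ 2 := by
  field_simp
  ring

namespace IsIntermediatePt

variable {X : Type*} [MetricSpace X] {x₀ x₁ x : X} {θ ε : ℝ}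

lemma add_sq_add_defect_le (h : IsIntermediatePt x₀ x₁ x θ ε) (hθ : θ ∈ Set.Ioo (0 : ℝ) 1) :
    (dist x₀ x + dist x x₁) ^ 2 + θ * (1 - θ) * (dist x₀ x / θ - dist x x₁ / (1 - θ)) ^ 2 ≤
      dist x₀ x₁ ^ 2 + θ * (1 - θ) * (ε * dist x₀ x₁) ^ 2 := by
  have hsplit := sq_div_add_sq_div_one_sub hθ.1.ne' (sub_pos.2 hθ.2).ne' (dist x₀ x) (dist x x₁)
  unfold IsIntermediatePt at h
  rw [hsplit] at h
  linarith

lemma abs_sub_le (h : IsIntermediatePt x₀ x₁ x θ ε) (hθ : θ ∈ Set.Ioo (0 : ℝ) 1)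
    (hε : 0 ≤ ε) :
    |dist x₀ x / θ - dist x x₁ / (1 - θ)| ≤ ε * dist x₀ x₁ := by
  have hw : 0 < θ * (1 - θ) := mul_pos hθ.1 (sub_pos.2 hθ.2)
  have htri : dist x₀ x₁ ^ 2 ≤ (dist x₀ x + dist x x₁) ^ 2 :=
    pow_le_pow_left₀ dist_nonneg (dist_triangle x₀ x x₁) 2
  have hdefect : (dist x₀ x / θ - dist x x₁ / (1 - θ)) ^ 2 ≤ (ε * dist x₀ x₁) ^ 2 :=
    le_of_mul_le_mul_left (by linarith [h.add_sq_add_defect_le hθ]) hw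
  exact abs_le_of_sq_le_sq hdefect (mul_nonneg hε dist_nonneg)

lemma dist_add_dist_le (h : IsIntermediatePt x₀ x₁ x θ ε) (hθ : θ ∈ Set.Ioo (0 : ℝ) 1) :
    dist x₀ x + dist x x₁ ≤ dist x₀ x₁ * Real.sqrt (1 + ε ^ 2 * θ * (1 - θ)) := by
  have hw : 0 ≤ θ * (1 - θ) := (mul_pos hθ.1 (sub_pos.2 hθ.2)).le
  have hsq : (dist x₀ x + dist x x₁) ^ 2 ≤ dist x₀ x₁ ^ 2 * (1 + ε ^ 2 * θ * (1 - θ)) := by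
    linarith [h.add_sq_add_defect_le hθ,
      mul_nonneg hw (sq_nonneg (dist x₀ x / θ - dist x x₁ / (1 - θ)))]
  calc dist x₀ x + dist x x₁ = Real.sqrt ((dist x₀ x + dist x x₁) ^ 2) :=
        (Real.sqrt_sq (add_nonneg dist_nonneg dist_nonneg)).symm
    _ ≤ Real.sqrt (dist x₀ x₁ ^ 2 * (1 + ε ^ 2 * θ * (1 - θ))) := Real.sqrt_le_sqrt hsq
    _ = dist x₀ x₁ * Real.sqrt (1 + ε ^ 2 * θ * (1 - θ)) := by
        rw [Real.sqrt_mul (sq_nonneg _), Real.sqrt_sq dist_nonneg]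

end IsIntermediatePt

theorem stmt0 {X : Type*} [MetricSpace X] (x₀ x₁ x : X) (θ ε : ℝ)
    (hθ : θ ∈ Set.Ioo (0:ℝ) 1) (hε : ε ∈ Set.Ioo (0:ℝ) 1)
    (h : IsIntermediatePt x₀ x₁ x θ ε) :
    |dist x₀ x / θ - dist x x₁ / (1 - θ)| ≤ ε * dist x₀ x₁ ∧
    dist x₀ x + dist x x₁ ≤ dist x₀ x₁ * Real.sqrt (1 + ε ^ 2 * θ * (1 - θ)) :=
  ⟨h.abs_sub_le hθ hε.1.le, h.dist_add_dist_le hθ⟩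
end

section
/- Let $D$ be an approximate length subset of a metric space $X$. Then for every $x_0,x_1\in D$ and every $L>d(x_0,x_1)$ there exists a family of points $\{x_\vartheta\}_{\vartheta\in\mathbb D}\subset D$ indexed by the dyadic rationals $\mathbb D=\{k2^{-n}:0\le k\le 2^n\}$ in $[0,1]$, with $x_0=x_0$, $x_1=x_1$, and $d(x_{\vartheta'},x_{\vartheta''})\le L|\vartheta'-\vartheta''|$ for all $\vartheta',\vartheta''\in\mathbb D$. -/
/-- `D` is an approximate length subset: any two of its points admit `ε`-midpoints in `D`. -/
def IsApproxLengthSubset {X : Type*} [MetricSpace X] (D : Set X) : Prop :=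
  ∀ x₀ ∈ D, ∀ x₁ ∈ D, ∀ ε : ℝ, ε ∈ Set.Ioo (0:ℝ) 1 → ∃ x ∈ D,
    dist x₀ x ^ 2 + dist x x₁ ^ 2 ≤ (1/2) * dist x₀ x₁ ^ 2 * (1 + ε ^ 2 / 4)

/-- The set of dyadic rationals in `[0,1]`. -/
def dyadics : Set ℝ := {θ : ℝ | ∃ k n : ℕ, k ≤ 2 ^ n ∧ θ = (k : ℝ) / 2 ^ n}

/-!
Strict inequalities leave room: if `dist a b < r`, an `ε`-midpoint with `ε` small enough lies
within `r / 2` of both `a` and `b`. Starting from the one-step chain `x₀, x₁`, shorter than `L`,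
and repeatedly inserting such midpoints gives at level `n` a chain of `2 ^ n` steps, each shorter
than `L / 2 ^ n`. Its `k`-th point is the value at `k / 2 ^ n` (consistently, since refining keeps
the old points at even positions), and the triangle inequality along the chain gives the bound.
-/

open Set

theorem le_half_mul_one_add_of_sq_add_sq_le {u v d ε : ℝ} (hd : 0 ≤ d) (hε : 0 ≤ ε)
    (huv : d ≤ u + v) (h : u ^ 2 + v ^ 2 ≤ 1 / 2 * d ^ 2 * (1 + ε ^ 2 / 4)) :
    u ≤ d / 2 * (1 + ε) := by
  have hsq : (u - d / 2) ^ 2 ≤ (d * ε / 2) ^ 2 := by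
    nlinarith [sq_nonneg (v - d / 2), sq_nonneg (d * ε)]
  nlinarith [mul_nonneg hd hε]

section StrictMidpoints

variable {X : Type*} [PseudoMetricSpace X]

def HasStrictMidpoints (D : Set X) : Prop :=
  ∀ a ∈ D, ∀ b ∈ D, ∀ r : ℝ, dist a b < r → ∃ m ∈ D, dist a m < r / 2 ∧ dist m b < r / 2

def IsDyadicChain (D : Set X) (L : ℝ) (n : ℕ) (p : ℕ → X) : Prop :=
  (∀ k ≤ 2 ^ n, p k ∈ D) ∧ ∀ k < 2 ^ n, dist (p k) (p (k + 1)) < L / 2 ^ n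

variable {D : Set X} {L : ℝ}

theorem IsDyadicChain.dist_le {n : ℕ} {p : ℕ → X} (hp : IsDyadicChain D L n p) {a b : ℕ}
    (ha : a ≤ 2 ^ n) (hb : b ≤ 2 ^ n) :
    dist (p a) (p b) ≤ L * |(a : ℝ) / 2 ^ n - b / 2 ^ n| := by
  wlog hab : a ≤ b generalizing a b
  · rw [dist_comm, abs_sub_comm]
    exact this hb ha (le_of_not_ge hab)
  have hsum := dist_le_Ico_sum_of_dist_le (f := p) hab (d := fun _ => L / 2 ^ n)
    fun _ hk => (hp.2 _ (by omega)).le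
  rw [Finset.sum_const, Nat.card_Ico, nsmul_eq_mul, Nat.cast_sub hab] at hsum
  rw [← sub_div, abs_div, abs_of_nonpos (by simpa using hab), abs_of_pos (by positivity)]
  exact hsum.trans_eq (by ring)

theorem IsDyadicChain.exists_refinement (hD : HasStrictMidpoints D) {n : ℕ} {p : ℕ → X}
    (hp : IsDyadicChain D L n p) :
    ∃ q : ℕ → X, IsDyadicChain D L (n + 1) q ∧ ∀ k, q (2 * k) = p k := by
  have hmid : ∀ k, ∃ m, k < 2 ^ n →
      m ∈ D ∧ dist (p k) m < L / 2 ^ (n + 1) ∧ dist m (p (k + 1)) < L / 2 ^ (n + 1) := by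
    intro k
    by_cases hk : k < 2 ^ n
    · obtain ⟨m, hm⟩ := hD _ (hp.1 k hk.le) _ (hp.1 (k + 1) hk) _ (hp.2 k hk)
      exact ⟨m, fun _ => by rwa [pow_succ, ← div_div]⟩
    · exact ⟨p 0, fun h => absurd h hk⟩
  choose m hm using hmid
  set q : ℕ → X := fun i => if i % 2 = 0 then p (i / 2) else m (i / 2)
  have hq_even (j : ℕ) : q (2 * j) = p j := by simp [q]
  have hq_odd (j : ℕ) : q (2 * j + 1) = m j := by
    simp [q, Nat.add_mod, show (2 * j + 1) / 2 = j by omega]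
  refine ⟨q, ⟨fun k hk => ?_, fun k hk => ?_⟩, hq_even⟩ <;>
    obtain ⟨j, rfl | rfl⟩ := Nat.even_or_odd' k
  · rw [hq_even]; exact hp.1 j (by omega)
  · rw [hq_odd]; exact (hm j (by omega)).1
  · rw [hq_even, hq_odd]; exact (hm j (by omega)).2.1
  · rw [hq_odd, show 2 * j + 1 + 1 = 2 * (j + 1) by ring, hq_even]
    exact (hm j (by omega)).2.2

theorem exists_dyadic_chains (hD : HasStrictMidpoints D) {x₀ x₁ : X} (hx₀ : x₀ ∈ D)
    (hx₁ : x₁ ∈ D) (hL : dist x₀ x₁ < L) :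
    ∃ g : ℕ → ℕ → X, (∀ n, IsDyadicChain D L n (g n)) ∧ g 0 0 = x₀ ∧ g 0 1 = x₁ ∧
      ∀ n k, g (n + 1) (2 * k) = g n k := by
  have h₀ : IsDyadicChain D L 0 fun k => if k = 0 then x₀ else x₁ := by
    refine ⟨fun k _ => ?_, fun k hk => ?_⟩
    · dsimp only
      split_ifs <;> assumption
    · obtain rfl : k = 0 := by simpa using hk
      simpa using hL
  choose refineChain hrefine using
    fun n (p : {p // IsDyadicChain D L n p}) => p.2.exists_refinement hD
  let chain : ∀ n, {p // IsDyadicChain D L n p} :=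
    fun n => Nat.rec ⟨_, h₀⟩ (fun n p => ⟨refineChain n p, (hrefine n p).1⟩) n
  exact ⟨fun n => (chain n).1, fun n => (chain n).2, rfl, rfl,
    fun n => (hrefine n (chain n)).2⟩

end StrictMidpoints

theorem IsApproxLengthSubset.hasStrictMidpoints {X : Type*} [MetricSpace X] {D : Set X}
    (hD : IsApproxLengthSubset D) : HasStrictMidpoints D := by
  intro a ha b hb r hr
  have hd : 0 ≤ dist a b := dist_nonneg
  -- any `ε ∈ (0, 1)` with `dist a b * (1 + ε) < r` will do
  set ε := (r - dist a b) / (r + dist a b + 1)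
  have hε : ε ∈ Ioo (0 : ℝ) 1 :=
    ⟨div_pos (by linarith) (by linarith), (div_lt_one (by linarith)).2 (by linarith)⟩
  have hεr : dist a b * (1 + ε) < r := by
    have : dist a b * ε < r - dist a b := by
      rw [mul_div_assoc', div_lt_iff₀ (by linarith)]
      nlinarith
    linarith
  obtain ⟨m, hm, hsq⟩ := hD a ha b hb ε hε
  refine ⟨m, hm, ?_, ?_⟩
  · exact (le_half_mul_one_add_of_sq_add_sq_le hd hε.1.le (dist_triangle a m b) hsq).trans_lt
      (by linarith)
  · have htri : dist a b ≤ dist m b + dist a m := by linarith [dist_triangle a m b]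
    exact (le_half_mul_one_add_of_sq_add_sq_le hd hε.1.le htri (by linarith)).trans_lt
      (by linarith)

theorem exists_fun_div_two_pow_eq {X : Type*} {g : ℕ → ℕ → X}
    (hg : ∀ n k, g (n + 1) (2 * k) = g n k) :
    ∃ f : ℝ → X, ∀ n k : ℕ, f (k / 2 ^ n) = g n k := by
  have hlift (n m k : ℕ) : g (n + m) (2 ^ m * k) = g n k := by
    induction m with
    | zero => simp
    | succ m ih => rw [← add_assoc, pow_succ', mul_assoc, hg, ih]
  have hfactor : Function.FactorsThrough (fun p : ℕ × ℕ => g p.1 p.2)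
      (fun p => (p.2 : ℝ) / 2 ^ p.1) := by
    rintro ⟨n, k⟩ ⟨m, j⟩ h
    have hkj : 2 ^ m * k = 2 ^ n * j := by
      field_simp at h
      exact_mod_cast (by linarith : (2 : ℝ) ^ m * k = 2 ^ n * j)
    dsimp only
    rw [← hlift n m k, hkj, add_comm, hlift]
  exact ⟨Function.extend _ _ fun _ => g 0 0, fun n k => hfactor.extend_apply _ (n, k)⟩

theorem exists_common_level_of_mem_dyadics {θ' θ'' : ℝ} (h' : θ' ∈ dyadics)
    (h'' : θ'' ∈ dyadics) :
    ∃ N a b : ℕ, a ≤ 2 ^ N ∧ b ≤ 2 ^ N ∧ θ' = (a : ℝ) / 2 ^ N ∧ θ'' = (b : ℝ) / 2 ^ N := by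
  obtain ⟨k, n, hk, rfl⟩ := h'
  obtain ⟨j, m, hj, rfl⟩ := h''
  refine ⟨n + m, 2 ^ m * k, 2 ^ n * j, ?_, ?_, ?_, ?_⟩
  · rw [pow_add, mul_comm]; gcongr
  · rw [pow_add]; gcongr
  · push_cast; field_simp; ring
  · push_cast; field_simp; ring

theorem stmt2 {X : Type*} [MetricSpace X] (D : Set X)
    (hD : IsApproxLengthSubset D) (x₀ x₁ : X) (hx₀ : x₀ ∈ D) (hx₁ : x₁ ∈ D)
    (L : ℝ) (hL : dist x₀ x₁ < L) :
    ∃ f : ℝ → X, (∀ θ ∈ dyadics, f θ ∈ D) ∧ f 0 = x₀ ∧ f 1 = x₁ ∧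
      ∀ θ' ∈ dyadics, ∀ θ'' ∈ dyadics, dist (f θ') (f θ'') ≤ L * |θ' - θ''| := by
  obtain ⟨g, hchain, hg₀, hg₁, hcompat⟩ :=
    exists_dyadic_chains hD.hasStrictMidpoints hx₀ hx₁ hL
  obtain ⟨f, hf⟩ := exists_fun_div_two_pow_eq hcompat
  refine ⟨f, ?_, by simpa [hg₀] using hf 0 0, by simpa [hg₁] using hf 0 1, ?_⟩
  · rintro _ ⟨k, n, hk, rfl⟩
    rw [hf]
    exact (hchain n).1 k hk
  · intro θ' h' θ'' h''
    obtain ⟨N, a, b, ha, hb, rfl, rfl⟩ := exists_common_level_of_mem_dyadics h' h''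
    rw [hf, hf]
    exact (hchain N).dist_le ha hb
end

section
/- If $D$ is a complete approximate length subset of a metric space $X$, then $D$ is a length subset of $X$: for every $x_0,x_1\in D$ and every $d>\mathrm{dist}(x_0,x_1)$ there exists an absolutely continuous curve in $D$ joining $x_0$ to $x_1$ of length at most $d$. -/
/-!
An `ε`-midpoint `m` of `a, b` has `dist a m` and `dist m b` within `ε · dist a b` of
`dist a b / 2`, so one can refine the pair `x₀, x₁` dyadically: level `n + 1` keeps the points
of level `n` and inserts approximate midpoints between consecutive ones. With errors summing to
less than the slack `d - dist x₀ x₁`, consecutive points of level `n` are at most `d / 2 ^ n`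
apart. The step functions `t ↦ P n ⌊2 ^ n t⌋₊` are then uniformly Cauchy, and their limit, which
exists since `D` is complete, is `d`-Lipschitz on `[0, 1]`, hence has variation at most `d` there.
-/

open Set Filter Topology
open scoped NNReal

section

variable {X : Type*}

section DyadicPoints

variable (mid : ℕ → X → X → X) (x₀ x₁ : X)

-- `dyadicPoints mid x₀ x₁ n k` is the point at time `k / 2 ^ n`; indices past `2 ^ n` are filler.
def dyadicPoints : ℕ → ℕ → X
  | 0, k => if k = 0 then x₀ else x₁
  | n + 1, k => if Even k then dyadicPoints n (k / 2)
      else mid n (dyadicPoints n (k / 2)) (dyadicPoints n (k / 2 + 1))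

@[simp]
theorem dyadicPoints_zero_zero : dyadicPoints mid x₀ x₁ 0 0 = x₀ := rfl

@[simp]
theorem dyadicPoints_zero_one : dyadicPoints mid x₀ x₁ 0 1 = x₁ := rfl

theorem dyadicPoints_succ_two_mul (n k : ℕ) :
    dyadicPoints mid x₀ x₁ (n + 1) (2 * k) = dyadicPoints mid x₀ x₁ n k := by
  simp [dyadicPoints]

theorem dyadicPoints_succ_two_mul_add_one (n k : ℕ) :
    dyadicPoints mid x₀ x₁ (n + 1) (2 * k + 1) =
      mid n (dyadicPoints mid x₀ x₁ n k) (dyadicPoints mid x₀ x₁ n (k + 1)) := by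
  simp [dyadicPoints, show (2 * k + 1) / 2 = k by omega]

variable {mid x₀ x₁} {D : Set X}

theorem dyadicPoints_mem (hmid : ∀ n, ∀ a ∈ D, ∀ b ∈ D, mid n a b ∈ D) (hx₀ : x₀ ∈ D)
    (hx₁ : x₁ ∈ D) (n k : ℕ) : dyadicPoints mid x₀ x₁ n k ∈ D := by
  induction n generalizing k with
  | zero => by_cases hk : k = 0 <;> simp [dyadicPoints, hk, hx₀, hx₁]
  | succ n ih =>
    rcases Nat.even_or_odd' k with ⟨j, rfl | rfl⟩
    · simpa [dyadicPoints_succ_two_mul] using ih j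
    · simpa [dyadicPoints_succ_two_mul_add_one] using hmid n _ (ih j) _ (ih (j + 1))

end DyadicPoints

variable [MetricSpace X]

theorem dist_dyadicPoints_le {mid : ℕ → X → X → X} {x₀ x₁ : X} {D : Set X} {δ c : ℕ → ℝ}
    (hmid : ∀ n, ∀ a ∈ D, ∀ b ∈ D,
      dist a (mid n a b) ≤ dist a b / 2 + δ n ∧ dist (mid n a b) b ≤ dist a b / 2 + δ n)
    (hPD : ∀ n k, dyadicPoints mid x₀ x₁ n k ∈ D) (h₀ : dist x₀ x₁ ≤ c 0)
    (hc : ∀ n, c n / 2 + δ n ≤ c (n + 1)) (n k : ℕ) :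
    dist (dyadicPoints mid x₀ x₁ n k) (dyadicPoints mid x₀ x₁ n (k + 1)) ≤ c n := by
  induction n generalizing k with
  | zero =>
    rcases Nat.eq_zero_or_pos k with rfl | hk
    · simpa using h₀
    · simpa [dyadicPoints, hk.ne'] using dist_nonneg.trans h₀
  | succ n ih =>
    have hhalf := hmid n _ (hPD n (k / 2)) _ (hPD n (k / 2 + 1))
    rcases Nat.even_or_odd' k with ⟨j, rfl | rfl⟩
    · rw [dyadicPoints_succ_two_mul, dyadicPoints_succ_two_mul_add_one]
      simp only [Nat.mul_div_cancel_left _ two_pos] at hhalf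
      linarith [ih j, hc n, hhalf.1]
    · rw [dyadicPoints_succ_two_mul_add_one, show 2 * j + 1 + 1 = 2 * (j + 1) by ring,
        dyadicPoints_succ_two_mul]
      simp only [show (2 * j + 1) / 2 = j by omega] at hhalf
      linarith [ih j, hc n, hhalf.2]

theorem LipschitzOnWith.of_tendsto_of_dist_le {α Y : Type*} [PseudoMetricSpace α]
    [PseudoMetricSpace Y] {s : Set α} {f : ℕ → α → Y} {F : α → Y} {K : ℝ≥0} {e : ℕ → ℝ}
    (hF : ∀ x ∈ s, Tendsto (fun n ↦ f n x) atTop (𝓝 (F x))) (he : Tendsto e atTop (𝓝 0))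
    (hf : ∀ n, ∀ x ∈ s, ∀ y ∈ s, dist (f n x) (f n y) ≤ K * dist x y + e n) :
    LipschitzOnWith K F s := by
  refine LipschitzOnWith.of_dist_le_mul fun x hx y hy ↦ ?_
  have hbound : Tendsto (fun n ↦ K * dist x y + e n) atTop (𝓝 (K * dist x y)) := by
    simpa using he.const_add (K * dist x y)
  exact le_of_tendsto_of_tendsto' ((hF x hx).dist (hF y hy)) hbound (fun n ↦ hf n x hx y hy)

theorem LipschitzOnWith.eVariationOn_Icc_le {E : Type*} [PseudoEMetricSpace E] {f : ℝ → E}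
    {K : ℝ≥0} {a b : ℝ} (hf : LipschitzOnWith K f (Icc a b)) :
    eVariationOn f (Icc a b) ≤ K * ENNReal.ofReal (b - a) := by
  simpa using hf.comp_eVariationOn_le (g := id) (mapsTo_id _)

theorem IsApproxLengthSubset.exists_dist_le_half_add {D : Set X} (hD : IsApproxLengthSubset D)
    {a b : X} (ha : a ∈ D) (hb : b ∈ D) {δ : ℝ} (hδ : 0 < δ) :
    ∃ m ∈ D, dist a m ≤ dist a b / 2 + δ ∧ dist m b ≤ dist a b / 2 + δ := by
  set c := dist a b
  have hc : 0 ≤ c := dist_nonneg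
  set ε := δ / (c + 2 * δ)
  have hε : ε ∈ Ioo 0 1 := ⟨by positivity, (div_lt_one (by positivity)).2 (by linarith)⟩
  have hcε : c * ε ≤ δ := by
    rw [mul_div_assoc', div_le_iff₀ (by positivity)]
    nlinarith
  obtain ⟨m, hm, hsq⟩ := hD a ha b hb ε hε
  have htri : c ≤ dist a m + dist m b := dist_triangle a m b
  -- For `u = dist a m`, `v = dist m b`: `(u - c/2)² + (v - c/2)² = u² + v² - c (u + v) + c²/2`
  -- and `c (u + v) ≥ c²`.
  have hdev : (dist a m - c / 2) ^ 2 + (dist m b - c / 2) ^ 2 ≤ (c * ε / 2) ^ 2 := by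
    nlinarith [mul_le_mul_of_nonneg_left htri hc]
  have hε0 : 0 ≤ c * ε / 2 := by have := hε.1; positivity
  refine ⟨m, hm, ?_, ?_⟩
  · nlinarith [sq_nonneg (dist m b - c / 2)]
  · nlinarith [sq_nonneg (dist a m - c / 2)]

theorem dist_le_mul_of_dist_succ_le {f : ℕ → X} {C : ℝ} (hf : ∀ k, dist (f k) (f (k + 1)) ≤ C)
    {i j : ℕ} (hij : i ≤ j) : dist (f i) (f j) ≤ C * (j - i) := by
  simpa [Nat.cast_sub hij, mul_comm] using
    dist_le_Ico_sum_of_dist_le (f := f) hij (fun _ _ ↦ hf _)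

noncomputable def dyadicStep (P : ℕ → ℕ → X) (n : ℕ) (t : ℝ) : X := P n ⌊2 ^ n * t⌋₊

section DyadicLimit

variable {P : ℕ → ℕ → X} {L : ℝ≥0}

theorem dist_dyadicStep_succ_le (hP : ∀ n k, P (n + 1) (2 * k) = P n k)
    (hdist : ∀ n k, dist (P n k) (P n (k + 1)) ≤ L / 2 ^ n) (n : ℕ) (t : ℝ) :
    dist (dyadicStep P n t) (dyadicStep P (n + 1) t) ≤ L / 2 ^ (n + 1) := by
  have hfloor : ⌊2 ^ n * t⌋₊ = ⌊2 ^ (n + 1) * t⌋₊ / 2 := by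
    rw [← Nat.floor_div_natCast, pow_succ]
    congr 1
    push_cast
    ring
  simp only [dyadicStep, hfloor]
  generalize ⌊2 ^ (n + 1) * t⌋₊ = k
  rw [← hP n (k / 2)]
  rcases Nat.even_or_odd' k with ⟨j, hj | hj⟩
  · rw [hj, Nat.mul_div_cancel_left _ two_pos, dist_self]
    positivity
  · rw [hj, show (2 * j + 1) / 2 = j by omega]
    exact hdist _ _

theorem dist_dyadicStep_le (hdist : ∀ n k, dist (P n k) (P n (k + 1)) ≤ L / 2 ^ n) (n : ℕ)
    {s t : ℝ} (hs : 0 ≤ s) (hst : s ≤ t) :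
    dist (dyadicStep P n s) (dyadicStep P n t) ≤ L * (t - s) + L / 2 ^ n := by
  have hmono : ⌊2 ^ n * s⌋₊ ≤ ⌊2 ^ n * t⌋₊ := Nat.floor_le_floor (by gcongr)
  have hgap : (⌊2 ^ n * t⌋₊ : ℝ) - ⌊2 ^ n * s⌋₊ ≤ 2 ^ n * (t - s) + 1 := by
    have := Nat.floor_le (a := 2 ^ n * t) (by have := hs.trans hst; positivity)
    have := Nat.sub_one_lt_floor (2 ^ n * s)
    linarith
  calc dist (dyadicStep P n s) (dyadicStep P n t)
      ≤ L / 2 ^ n * ((⌊2 ^ n * t⌋₊ : ℝ) - ⌊2 ^ n * s⌋₊) :=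
        dist_le_mul_of_dist_succ_le (hdist n) hmono
    _ ≤ L / 2 ^ n * (2 ^ n * (t - s) + 1) := by gcongr
    _ = L * (t - s) + L / 2 ^ n := by field_simp

theorem exists_lipschitzOnWith_of_dyadic {D : Set X} (hD : IsComplete D) (hPD : ∀ n k, P n k ∈ D)
    (hP : ∀ n k, P (n + 1) (2 * k) = P n k)
    (hdist : ∀ n k, dist (P n k) (P n (k + 1)) ≤ L / 2 ^ n) :
    ∃ γ : ℝ → X, (∀ t, γ t ∈ D) ∧ γ 0 = P 0 0 ∧ γ 1 = P 0 1 ∧ LipschitzOnWith L γ (Ici 0) := by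
  have hlim : ∀ t, ∃ x ∈ D, Tendsto (fun n ↦ dyadicStep P n t) atTop (𝓝 x) := fun t ↦
    cauchySeq_tendsto_of_isComplete hD (fun n ↦ hPD _ _) <| cauchySeq_of_le_geometric_two
      (C := L) fun n ↦ by
        simpa [pow_succ, div_div, mul_comm] using dist_dyadicStep_succ_le hP hdist n t
  choose γ hγD hγ using hlim
  have hconst : ∀ t x, (∀ n, dyadicStep P n t = x) → γ t = x := fun t x h ↦
    tendsto_nhds_unique (hγ t) (by simp [h])
  have hP0 : ∀ n, P n 0 = P 0 0 := fun n ↦ by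
    induction n with
    | zero => rfl
    | succ n ih => simpa using (hP n 0).trans ih
  have hP1 : ∀ n, P n (2 ^ n) = P 0 1 := fun n ↦ by
    induction n with
    | zero => rfl
    | succ n ih => rw [pow_succ', hP, ih]
  refine ⟨γ, hγD, hconst 0 _ fun n ↦ by simp [dyadicStep, hP0], hconst 1 _ fun n ↦ ?_, ?_⟩
  · have : ⌊(2 : ℝ) ^ n⌋₊ = 2 ^ n := by exact_mod_cast Nat.floor_natCast (2 ^ n)
    simpa [dyadicStep, this] using hP1 n
  · have hL : Tendsto (fun n : ℕ ↦ (L : ℝ) / 2 ^ n) atTop (𝓝 0) :=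
      tendsto_const_nhds.div_atTop (tendsto_pow_atTop_atTop_of_one_lt one_lt_two)
    refine LipschitzOnWith.of_tendsto_of_dist_le (fun t _ ↦ hγ t) hL fun n s hs t ht ↦ ?_
    rcases le_total s t with hst | hts
    · simpa [Real.dist_eq, abs_of_nonpos (sub_nonpos.2 hst), neg_sub] using
        dist_dyadicStep_le hdist n hs hst
    · simpa [Real.dist_eq, abs_of_nonneg (sub_nonneg.2 hts), dist_comm] using
        dist_dyadicStep_le hdist n ht hts

end DyadicLimit

end

theorem stmt3 {X : Type*} [MetricSpace X] (D : Set X)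
    (hcompl : IsComplete D) (hD : IsApproxLengthSubset D) :
    ∀ x₀ ∈ D, ∀ x₁ ∈ D, ∀ d : ℝ, dist x₀ x₁ < d →
      ∃ γ : ℝ → X, (∀ t ∈ Set.Icc (0:ℝ) 1, γ t ∈ D) ∧ γ 0 = x₀ ∧ γ 1 = x₁ ∧
        ContinuousOn γ (Set.Icc (0:ℝ) 1) ∧
        eVariationOn γ (Set.Icc (0:ℝ) 1) ≤ ENNReal.ofReal d := by
  intro x₀ hx₀ x₁ hx₁ d hd
  have : Nonempty X := ⟨x₀⟩
  set s := d - dist x₀ x₁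
  have hs : 0 < s := sub_pos.2 hd
  choose! mid hmidD hmid using fun (n : ℕ) a (ha : a ∈ D) b (hb : b ∈ D) ↦
    hD.exists_dist_le_half_add ha hb (δ := s / 4 ^ (n + 1)) (by positivity)
  have hPD := dyadicPoints_mem (x₀ := x₀) (x₁ := x₁) hmidD hx₀ hx₁
  -- The slack `s` is spent geometrically: `s / 4 ^ (n + 1)` at level `n`.
  have hgap := dist_dyadicPoints_le hmid hPD (c := fun n ↦ d / 2 ^ n - s / 4 ^ n)
    (by simp [s]) fun n ↦ le_of_eq (by field_simp; ring)
  obtain ⟨γ, hγD, hγ0, hγ1, hγ⟩ := exists_lipschitzOnWith_of_dyadic (L := d.toNNReal) hcompl hPD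
    (dyadicPoints_succ_two_mul mid x₀ x₁) fun n k ↦ (hgap n k).trans <| by
      rw [Real.coe_toNNReal _ (by linarith [dist_nonneg (x := x₀) (y := x₁)])]
      linarith [show 0 ≤ s / 4 ^ n by positivity]
  have hγ' : LipschitzOnWith d.toNNReal γ (Icc 0 1) := hγ.mono Icc_subset_Ici_self
  refine ⟨γ, fun t _ ↦ hγD t, by simpa using hγ0, by simpa using hγ1, hγ'.continuousOn, ?_⟩
  simpa [ENNReal.ofReal] using hγ'.eVariationOn_Icc_le
end

section
/- Let $u:(0,\infty)\to X$ be a continuous curve in a metric space and let $\mathsf v:[0,1]\to X$ be a constant-speed geodesic with $\mathsf v_0=u_t$ for some $t>0$. Then the map $s\mapsto s^{-1}\,\frac{d^+}{dt}\,d(u_t,\mathsf v_s)^2$ is nonincreasing on $(0,1]$, where $\frac{d^+}{dt}$ denotes the upper right Dini derivative in $t$. -/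
/-!
Write `D = d(v₀, v₁)` and `x = u_{t+h}`. Since `d(u_t, v_s) = s D`, the scaled difference quotient
`s⁻¹ (d(x, v_s)² - d(u_t, v_s)²) / h` is `s⁻¹ (d(x, v_s)² - s² D²) / h`. The triangle inequality
through `v_{s₁}` gives `d(x, v_{s₂}) ≤ d(x, v_{s₁}) + (s₂ - s₁) D`, and an elementary computation
turns this into monotonicity of the scaled quotients for every fixed `h > 0`; a positive constant
factor commutes with the `limsup`.
-/

open Filter Set Topology

/-- Upper right Dini derivative, with values in `EReal`. -/
noncomputable def upperDiniDeriv (f : ℝ → ℝ) (t : ℝ) : EReal :=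
  Filter.limsup (fun h => (((f (t + h) - f t) / h : ℝ) : EReal)) (nhdsWithin 0 (Set.Ioi 0))

theorem coe_mul_upperDiniDeriv (f : ℝ → ℝ) (t : ℝ) {c : ℝ} (hc : 0 ≤ c) :
    (c : EReal) * upperDiniDeriv f t =
      limsup (fun h => ((c * ((f (t + h) - f t) / h) : ℝ) : EReal)) (𝓝[>] 0) := by
  simp only [EReal.coe_mul]
  exact (EReal.limsup_const_mul_of_nonneg_of_ne_top (mod_cast hc) (EReal.coe_ne_top c)).symm

theorem coe_mul_upperDiniDeriv_le_of_eventually {f g : ℝ → ℝ} {t a b : ℝ} (ha : 0 ≤ a)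
    (hb : 0 ≤ b) (hfg : ∀ᶠ h in 𝓝[>] 0, a * (f (t + h) - f t) ≤ b * (g (t + h) - g t)) :
    (a : EReal) * upperDiniDeriv f t ≤ b * upperDiniDeriv g t := by
  rw [coe_mul_upperDiniDeriv f t ha, coe_mul_upperDiniDeriv g t hb]
  refine limsup_le_limsup ?_
  filter_upwards [hfg, self_mem_nhdsWithin] with h hh (hpos : 0 < h)
  simp only [← mul_div_assoc]
  exact_mod_cast div_le_div_of_nonneg_right hh hpos.le

theorem inv_mul_sq_sub_sq_le {a b D s₁ s₂ : ℝ} (hb : 0 ≤ b) (hs₁ : 0 < s₁) (h12 : s₁ ≤ s₂) (hab : b ≤ a + (s₂ - s₁) * D) :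
    s₂⁻¹ * (b ^ 2 - (s₂ * D) ^ 2) ≤ s₁⁻¹ * (a ^ 2 - (s₁ * D) ^ 2) := by
  rw [inv_mul_eq_div, inv_mul_eq_div, div_le_div_iff₀ (hs₁.trans_le h12) hs₁]
  have hb2 : b ^ 2 ≤ (a + (s₂ - s₁) * D) ^ 2 := pow_le_pow_left₀ hb hab 2
  -- for `b = a + (s₂ - s₁) D` the cross-multiplied sides differ by exactly `(s₂ - s₁)(a - s₁ D)²`
  nlinarith [mul_nonneg (sub_nonneg.2 h12) (sq_nonneg (a - s₁ * D)),
    mul_le_mul_of_nonneg_left hb2 hs₁.le]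

theorem inv_mul_dist_sq_sub_dist_sq_le_of_geodesic {X : Type*} [PseudoMetricSpace X]
    {v : ℝ → X} (hgeo : ∀ s₁ ∈ Icc (0:ℝ) 1, ∀ s₂ ∈ Icc (0:ℝ) 1,
      dist (v s₁) (v s₂) = |s₁ - s₂| * dist (v 0) (v 1))
    (x : X) {s₁ s₂ : ℝ} (hs₁ : 0 < s₁) (h12 : s₁ ≤ s₂) (hs₂ : s₂ ≤ 1) :
    s₂⁻¹ * (dist x (v s₂) ^ 2 - dist (v 0) (v s₂) ^ 2) ≤
      s₁⁻¹ * (dist x (v s₁) ^ 2 - dist (v 0) (v s₁) ^ 2) := by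
  have mem₁ : s₁ ∈ Icc (0:ℝ) 1 := ⟨hs₁.le, h12.trans hs₂⟩
  have mem₂ : s₂ ∈ Icc (0:ℝ) 1 := ⟨hs₁.le.trans h12, hs₂⟩
  have dist_start : ∀ s ∈ Icc (0:ℝ) 1, dist (v 0) (v s) = s * dist (v 0) (v 1) := fun s hs => by
    rw [hgeo 0 ⟨le_rfl, zero_le_one⟩ s hs, zero_sub, abs_neg, abs_of_nonneg hs.1]
  have dist₁₂ : dist (v s₁) (v s₂) = (s₂ - s₁) * dist (v 0) (v 1) := by
    rw [hgeo s₁ mem₁ s₂ mem₂, abs_sub_comm, abs_of_nonneg (sub_nonneg.2 h12)]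
  rw [dist_start s₁ mem₁, dist_start s₂ mem₂]
  refine inv_mul_sq_sub_sq_le dist_nonneg hs₁ h12 ?_
  exact dist₁₂ ▸ dist_triangle x (v s₁) (v s₂)

theorem stmt15_general {X : Type*} [MetricSpace X] (u : ℝ → X) (t : ℝ) (v : ℝ → X)
    (hgeo : ∀ s₁ ∈ Set.Icc (0:ℝ) 1, ∀ s₂ ∈ Set.Icc (0:ℝ) 1,
      dist (v s₁) (v s₂) = |s₁ - s₂| * dist (v 0) (v 1))
    (hv0 : v 0 = u t) :
    ∀ s₁ ∈ Set.Ioc (0:ℝ) 1, ∀ s₂ ∈ Set.Ioc (0:ℝ) 1, s₁ ≤ s₂ →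
      ((s₂⁻¹ : ℝ) : EReal) * upperDiniDeriv (fun τ => dist (u τ) (v s₂) ^ 2) t ≤
        ((s₁⁻¹ : ℝ) : EReal) * upperDiniDeriv (fun τ => dist (u τ) (v s₁) ^ 2) t := by
  intro s₁ ⟨hs₁, _⟩ s₂ ⟨_, hs₂⟩ h12
  refine coe_mul_upperDiniDeriv_le_of_eventually (by positivity) (by positivity)
    (Eventually.of_forall fun h => ?_)
  rw [← hv0]
  exact inv_mul_dist_sq_sub_dist_sq_le_of_geodesic hgeo (u (t + h)) hs₁ h12 hs₂

theorem stmt15 {X : Type*} [MetricSpace X] (u : ℝ → X)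
    (hu : ContinuousOn u (Set.Ioi 0)) (t : ℝ) (ht : 0 < t) (v : ℝ → X)
    (hgeo : ∀ s₁ ∈ Set.Icc (0:ℝ) 1, ∀ s₂ ∈ Set.Icc (0:ℝ) 1,
      dist (v s₁) (v s₂) = |s₁ - s₂| * dist (v 0) (v 1))
    (hv0 : v 0 = u t) :
    ∀ s₁ ∈ Set.Ioc (0:ℝ) 1, ∀ s₂ ∈ Set.Ioc (0:ℝ) 1, s₁ ≤ s₂ →
      ((s₂⁻¹ : ℝ) : EReal) * upperDiniDeriv (fun τ => dist (u τ) (v s₂) ^ 2) t ≤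
        ((s₁⁻¹ : ℝ) : EReal) * upperDiniDeriv (fun τ => dist (u τ) (v s₁) ^ 2) t :=
  stmt15_general u t v hgeo hv0
end
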